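/- (Combinatorial core of the singular-support theorem.) Assume quasi-symmetry and μ(ℤ^N) = ℤ^k. For I ⊆ {1,…,N} put A_I = −β_I − C_I + ∇. Let ξ be a nonzero linear functional on ℝ^k, δ ∈ ℝ^k, v ∈ ℤ^k, and let F_ξ = {x∈∇ : ξ(x) = max_{y∈∇} ξ(y)} be the face of ∇ exposed by ξ. Then there exist I, J ⊆ {1,…,N} with δ−v ∈ A_I, δ−v ∈ A_J, {i : ξ(β_i) < 0} ⊆ I ⊆ {i : ξ(β_i) ≤ 0}, and J ⊆ {i : ξ(β_i) ≥ 0}, if and only if δ ∈ v + Aff(F_ξ), the affine hull of F_ξ. -/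

import Mathlib

open Pointwise
open scoped Classical

noncomputable section

/-- The zonotope `∇ = (1/2)∑_i [0, β_i]`. -/
def nabla {N k : ℕ} (β : Fin N → (Fin k → ℝ)) : Set (Fin k → ℝ) :=
  (2⁻¹ : ℝ) • ∑ i : Fin N, segment ℝ 0 (β i)

/-- The convex cone `C_I` generated by `{β_i : i ∈ I}`. -/
def coneI {N k : ℕ} (β : Fin N → (Fin k → ℝ)) (I : Finset (Fin N)) :
    Set (Fin k → ℝ) :=
  {y | ∃ c : Fin N → ℝ, (∀ i, 0 ≤ c i) ∧ (∀ i, i ∉ I → c i = 0) ∧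
    y = ∑ i, c i • β i}

/-- `A_I = −β_I − C_I + ∇`. -/
def AI {N k : ℕ} (β : Fin N → (Fin k → ℝ)) (I : Finset (Fin N)) :
    Set (Fin k → ℝ) :=
  {x | ∃ c ∈ coneI β I, ∃ nn ∈ nabla β, x = -(∑ i ∈ I, β i) - c + nn}

/-- The face `F_ξ` of `∇` exposed by the linear functional `ξ`. -/
def exposedFace {N k : ℕ} (β : Fin N → (Fin k → ℝ))
    (ξ : (Fin k → ℝ) →ₗ[ℝ] ℝ) : Set (Fin k → ℝ) :=
  {x ∈ nabla β | ∀ y ∈ nabla β, ξ y ≤ ξ x}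


/-!
Let `p = ½ ∑_{ξ(β_i) > 0} β_i` and let `V` be the span of the `β_i` with `ξ(β_i) = 0`.
Writing points of `∇` as `½ ∑ t_i β_i` with `t ∈ [0,1]^N` shows `ξ ≤ ξ(p)` on `∇`, with equality
only when `t_i` agrees with the indicator of `{ξ(β_i) > 0}` off `{ξ(β_i) = 0}`;
hence `p ∈ F_ξ ⊆ p + V`, and the points `p + β_i / 2` give `Aff(F_ξ) = p + V`.

Quasi-symmetry gives `∑ β_i = 0`, so `∇ = -∇`, and `-β_i` is a sum of the other `β_j` on the
line of `β_i`, so `V` lies in the cone `C_Z` over `Z = {ξ(β_i) = 0}`.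
If `x ∈ A_I ∩ A_J`, the sign conditions force `ξ(x) ≥ ξ(p)` from `I` and `ξ(x) ≤ ξ(p)` from `J`;
equality puts `J` inside `Z` and the `∇`-part of `x` in `F_ξ`, so `x ∈ p + V`.
Conversely, for `x ∈ p + V` take `J = Z` and `I = {ξ(β_i) ≤ 0}`, with `p - x ∈ V ⊆ C_Z` as
cone part.
-/

open Finset Submodule

section QuasiSymmetric

variable {K ι E : Type*} [Field K] [Fintype ι] [AddCommGroup E] [Module K E]

variable (K) in
def QuasiSymmetric (β : ι → E) : Prop :=
  ∀ L : Submodule K E, Module.finrank K L = 1 →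
    ∑ i ∈ univ.filter (fun i => β i ∈ L), β i = 0

variable {β : ι → E}

lemma QuasiSymmetric.sum_filter_mem_span_singleton (hqs : QuasiSymmetric K β)
    (hβ0 : ∀ i, β i ≠ 0) (i : ι) :
    ∑ j ∈ univ.filter (fun j => β j ∈ K ∙ β i), β j = 0 :=
  hqs _ (finrank_span_singleton (hβ0 i))

/-- Group the `β i` by the line they span; each group sums to zero. -/
lemma QuasiSymmetric.sum_eq_zero (hqs : QuasiSymmetric K β) (hβ0 : ∀ i, β i ≠ 0) :
    ∑ i, β i = 0 := by
  let line : ι → Submodule K E := fun i => K ∙ β i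
  rw [← sum_fiberwise_of_maps_to (t := univ.image line) (fun i _ => mem_image_of_mem line
    (mem_univ i))]
  refine Finset.sum_eq_zero fun L hL => ?_
  obtain ⟨i, -, rfl⟩ := mem_image.1 hL
  convert hqs.sum_filter_mem_span_singleton hβ0 i using 2
  ext j
  simp only [mem_filter, mem_univ, true_and, line]
  refine ⟨fun h => h ▸ mem_span_singleton_self (β j), fun h => ?_⟩
  obtain ⟨a, ha⟩ := mem_span_singleton.1 h
  have ha0 : a ≠ 0 := by rintro rfl; exact hβ0 j (by simpa using ha.symm)
  rw [← ha, span_singleton_smul_eq ha0.isUnit]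

lemma QuasiSymmetric.neg_mem_hull [LinearOrder K] [IsStrictOrderedRing K]
    (hqs : QuasiSymmetric K β) (hβ0 : ∀ i, β i ≠ 0) (i : ι) :
    -β i ∈ PointedCone.hull K (β '' {j | β j ∈ K ∙ β i}) := by
  have hi : i ∈ univ.filter (fun j => β j ∈ K ∙ β i) := by simp [mem_span_singleton_self]
  rw [← eq_neg_of_add_eq_zero_left ((sum_erase_add _ _ hi).trans
    (hqs.sum_filter_mem_span_singleton hβ0 i))]
  exact sum_mem fun j hj => PointedCone.subset_hull
    ⟨j, by simpa using (mem_filter.1 (mem_of_mem_erase hj)).2, rfl⟩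

end QuasiSymmetric

lemma span_subset_hull_of_neg_mem {R E : Type*} [Ring R] [LinearOrder R] [IsOrderedRing R]
    [AddCommGroup E] [Module R E] {s : Set E} (h : ∀ x ∈ s, -x ∈ PointedCone.hull R s) :
    (span R s : Set E) ⊆ PointedCone.hull R s := by
  have : span R s ≤ (PointedCone.hull R s).lineal :=
    span_le.2 fun x hx => ⟨PointedCone.subset_hull hx, h x hx⟩
  exact fun x hx => (this hx).1

section Zonotope

variable {N k : ℕ} (β : Fin N → (Fin k → ℝ))

lemma coneI_eq_hull (I : Finset (Fin N)) :
    coneI β I = PointedCone.hull ℝ (β '' I) := by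
  ext y
  rw [SetLike.mem_coe, mem_span_image_finset_iff_exists_fun']
  constructor
  · rintro ⟨c, hc0, hcI, rfl⟩
    refine ⟨fun i => ⟨c i, hc0 i⟩, ?_⟩
    simp only [Nonneg.mk_smul]
    exact sum_subset (subset_univ I) fun i _ hi => by rw [hcI i hi, zero_smul]
  · rintro ⟨c, rfl⟩
    refine ⟨fun i => if i ∈ I then (c i : ℝ) else 0, fun i => ?_, fun i hi => if_neg hi, ?_⟩
    · by_cases hi : i ∈ I <;> simp [hi, (c i).2]
    · simp [ite_smul, Nonneg.coe_smul]

lemma coneI_subset_span (I : Finset (Fin N)) : coneI β I ⊆ span ℝ (β '' I) := by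
  rw [coneI_eq_hull]
  exact PointedCone.hull_le_span ℝ _

lemma coneI_mono {I J : Finset (Fin N)} (h : I ⊆ J) : coneI β I ⊆ coneI β J := by
  rw [coneI_eq_hull, coneI_eq_hull]
  exact span_mono (Set.image_mono (coe_subset.2 h))

variable {β} in
lemma apply_nonneg_of_mem_coneI {ξ : (Fin k → ℝ) →ₗ[ℝ] ℝ} {I : Finset (Fin N)}
    (hI : ∀ i ∈ I, 0 ≤ ξ (β i)) {c : Fin k → ℝ} (hc : c ∈ coneI β I) : 0 ≤ ξ c := by
  obtain ⟨c, hc0, hcI, rfl⟩ := hc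
  rw [map_sum]
  refine sum_nonneg fun i _ => ?_
  rw [map_smul, smul_eq_mul]
  by_cases hi : i ∈ I
  · exact mul_nonneg (hc0 i) (hI i hi)
  · rw [hcI i hi, zero_mul]

lemma mem_nabla_iff {x : Fin k → ℝ} :
    x ∈ nabla β ↔ ∃ t : Fin N → ℝ, (∀ i, t i ∈ Set.Icc 0 1) ∧
      x = (2⁻¹ : ℝ) • ∑ i, t i • β i := by
  simp only [nabla, Set.mem_smul_set, Set.mem_fintype_sum, segment_eq_image, Set.mem_image]
  constructor
  · rintro ⟨-, ⟨g, hg, rfl⟩, rfl⟩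
    choose t ht hgt using hg
    exact ⟨t, ht, by simp [← hgt]⟩
  · rintro ⟨t, ht, rfl⟩
    exact ⟨_, ⟨fun i => t i • β i, fun i => ⟨t i, ht i, by simp⟩, rfl⟩, rfl⟩

lemma half_sum_mem_nabla (S : Finset (Fin N)) : (2⁻¹ : ℝ) • ∑ i ∈ S, β i ∈ nabla β := by
  refine (mem_nabla_iff β).2 ⟨fun i => if i ∈ S then 1 else 0, fun i => ?_, ?_⟩
  · by_cases hi : i ∈ S <;> simp [hi]
  · simp [ite_smul]

lemma neg_mem_nabla (hsum : ∑ i, β i = 0) {x : Fin k → ℝ} (hx : x ∈ nabla β) :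
    -x ∈ nabla β := by
  obtain ⟨t, ht, rfl⟩ := (mem_nabla_iff β).1 hx
  refine (mem_nabla_iff β).2 ⟨fun i => 1 - t i, fun i => ⟨by linarith [(ht i).2],
    by linarith [(ht i).1]⟩, ?_⟩
  simp only [sub_smul, one_smul, sum_sub_distrib, hsum, zero_sub, smul_neg]

end Zonotope

section Vertex

variable {N k : ℕ} (β : Fin N → (Fin k → ℝ)) (ξ : (Fin k → ℝ) →ₗ[ℝ] ℝ)

def zeroIdx : Finset (Fin N) := univ.filter fun i => ξ (β i) = 0

def posIdx : Finset (Fin N) := univ.filter fun i => 0 < ξ (β i)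

def nablaVertex : Fin k → ℝ := (2⁻¹ : ℝ) • ∑ i ∈ posIdx β ξ, β i

def faceDirection : Submodule ℝ (Fin k → ℝ) := span ℝ (β '' zeroIdx β ξ)

variable {β ξ}

lemma mem_zeroIdx {i : Fin N} : i ∈ zeroIdx β ξ ↔ ξ (β i) = 0 := by simp [zeroIdx]

lemma mem_posIdx {i : Fin N} : i ∈ posIdx β ξ ↔ 0 < ξ (β i) := by simp [posIdx]

lemma beta_mem_faceDirection {i : Fin N} (hi : ξ (β i) = 0) : β i ∈ faceDirection β ξ :=
  subset_span ⟨i, mem_zeroIdx.2 hi, rfl⟩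

lemma nablaVertex_sub_eq (t : Fin N → ℝ) :
    nablaVertex β ξ - (2⁻¹ : ℝ) • ∑ i, t i • β i =
      (2⁻¹ : ℝ) • ∑ i, ((if 0 < ξ (β i) then 1 else 0) - t i) • β i := by
  simp [nablaVertex, posIdx, sum_filter, sub_smul, ite_smul, sum_sub_distrib, smul_sub]

lemma ite_pos_sub_mul_self_nonneg {a t : ℝ} (ht : t ∈ Set.Icc 0 1) :
    0 ≤ ((if 0 < a then 1 else 0) - t) * a := by
  obtain ⟨ht0, ht1⟩ := ht
  split_ifs <;> nlinarith

lemma apply_nablaVertex_sub_eq (t : Fin N → ℝ) :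
    ξ (nablaVertex β ξ - (2⁻¹ : ℝ) • ∑ i, t i • β i) =
      2⁻¹ * ∑ i, ((if 0 < ξ (β i) then 1 else 0) - t i) * ξ (β i) := by
  simp [nablaVertex_sub_eq]

lemma apply_le_apply_nablaVertex {y : Fin k → ℝ} (hy : y ∈ nabla β) :
    ξ y ≤ ξ (nablaVertex β ξ) := by
  obtain ⟨t, ht, rfl⟩ := (mem_nabla_iff β).1 hy
  rw [← sub_nonneg, ← map_sub, apply_nablaVertex_sub_eq]
  exact mul_nonneg (by norm_num) (sum_nonneg fun i _ => ite_pos_sub_mul_self_nonneg (ht i))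

lemma nablaVertex_sub_mem_faceDirection {y : Fin k → ℝ} (hy : y ∈ nabla β)
    (hξy : ξ y = ξ (nablaVertex β ξ)) : nablaVertex β ξ - y ∈ faceDirection β ξ := by
  obtain ⟨t, ht, rfl⟩ := (mem_nabla_iff β).1 hy
  have hsum : ∑ i, ((if 0 < ξ (β i) then 1 else 0) - t i) * ξ (β i) = 0 := by
    have h := apply_nablaVertex_sub_eq (β := β) (ξ := ξ) t
    rw [map_sub, hξy, sub_self] at h
    linarith
  have hzero := (sum_eq_zero_iff_of_nonneg fun i _ => ite_pos_sub_mul_self_nonneg (ht i)).1 hsum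
  rw [nablaVertex_sub_eq]
  refine smul_mem _ _ (sum_mem fun i _ => ?_)
  rcases mul_eq_zero.1 (hzero i (mem_univ i)) with hc | hi
  · rw [hc, zero_smul]
    exact zero_mem _
  · exact smul_mem _ _ (beta_mem_faceDirection hi)

end Vertex

section Face

variable {N k : ℕ} {β : Fin N → (Fin k → ℝ)} {ξ : (Fin k → ℝ) →ₗ[ℝ] ℝ}

lemma nablaVertex_mem_exposedFace : nablaVertex β ξ ∈ exposedFace β ξ :=
  ⟨half_sum_mem_nabla β _, fun _ hy => apply_le_apply_nablaVertex hy⟩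

lemma nablaVertex_add_half_mem_exposedFace {i : Fin N} (hi : ξ (β i) = 0) :
    nablaVertex β ξ + (2⁻¹ : ℝ) • β i ∈ exposedFace β ξ := by
  have hiP : i ∉ posIdx β ξ := by simp [mem_posIdx, hi]
  have hmem := half_sum_mem_nabla β (insert i (posIdx β ξ))
  rw [sum_insert hiP, smul_add, add_comm] at hmem
  refine ⟨hmem, fun y hy => ?_⟩
  rw [map_add, map_smul, hi, smul_zero, add_zero]
  exact apply_le_apply_nablaVertex hy

lemma direction_affineSpan_exposedFace :
    (affineSpan ℝ (exposedFace β ξ)).direction = faceDirection β ξ := by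
  rw [direction_affineSpan, vectorSpan_eq_span_vsub_set_right ℝ nablaVertex_mem_exposedFace]
  apply le_antisymm
  · refine span_le.2 ?_
    rintro _ ⟨y, ⟨hy, hmax⟩, rfl⟩
    have h := nablaVertex_sub_mem_faceDirection hy
      (le_antisymm (apply_le_apply_nablaVertex hy) (hmax _ (half_sum_mem_nabla β _)))
    simpa using neg_mem h
  · refine span_le.2 ?_
    rintro _ ⟨i, hi, rfl⟩
    have h := subset_span (R := ℝ) (Set.mem_image_of_mem (· -ᵥ nablaVertex β ξ)
      (nablaVertex_add_half_mem_exposedFace (mem_zeroIdx.1 hi)))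
    simpa using smul_mem _ (2 : ℝ) h

lemma mem_affineSpan_exposedFace_iff {x : Fin k → ℝ} :
    x ∈ affineSpan ℝ (exposedFace β ξ) ↔ x - nablaVertex β ξ ∈ faceDirection β ξ := by
  rw [← AffineSubspace.vsub_right_mem_direction_iff_mem
    (subset_affineSpan ℝ _ nablaVertex_mem_exposedFace), direction_affineSpan_exposedFace,
    vsub_eq_sub]

end Face

section Membership

variable {N k : ℕ} {β : Fin N → (Fin k → ℝ)} {ξ : (Fin k → ℝ) →ₗ[ℝ] ℝ} {x : Fin k → ℝ}

lemma faceDirection_subset_coneI (hqs : QuasiSymmetric ℝ β) (hβ0 : ∀ i, β i ≠ 0) :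
    (faceDirection β ξ : Set (Fin k → ℝ)) ⊆ coneI β (zeroIdx β ξ) := by
  rw [coneI_eq_hull]
  refine span_subset_hull_of_neg_mem ?_
  rintro _ ⟨i, hi, rfl⟩
  refine span_mono (Set.image_mono fun j hj => ?_) (hqs.neg_mem_hull hβ0 i)
  obtain ⟨a, ha⟩ := mem_span_singleton.1 hj
  simp [mem_zeroIdx, ← ha, mem_zeroIdx.1 hi]

lemma mem_AI_zeroIdx (hqs : QuasiSymmetric ℝ β) (hβ0 : ∀ i, β i ≠ 0)
    (hx : x - nablaVertex β ξ ∈ faceDirection β ξ) : x ∈ AI β (zeroIdx β ξ) := by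
  have hZ : ∑ i ∈ zeroIdx β ξ, β i ∈ faceDirection β ξ :=
    sum_mem fun i hi => beta_mem_faceDirection (mem_zeroIdx.1 hi)
  refine ⟨nablaVertex β ξ - x - ∑ i ∈ zeroIdx β ξ, β i,
    faceDirection_subset_coneI hqs hβ0 (sub_mem (by simpa using neg_mem hx) hZ),
    nablaVertex β ξ, half_sum_mem_nabla β _, by abel⟩

lemma mem_AI_compl_posIdx (hqs : QuasiSymmetric ℝ β) (hβ0 : ∀ i, β i ≠ 0)
    (hx : x - nablaVertex β ξ ∈ faceDirection β ξ) : x ∈ AI β (posIdx β ξ)ᶜ := by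
  have hZP : zeroIdx β ξ ⊆ (posIdx β ξ)ᶜ := fun i hi => by
    simp [mem_posIdx, mem_zeroIdx.1 hi]
  have hcompl : ∑ i ∈ (posIdx β ξ)ᶜ, β i = -∑ i ∈ posIdx β ξ, β i :=
    eq_neg_of_add_eq_zero_left ((sum_compl_add_sum _ β).trans (hqs.sum_eq_zero hβ0))
  refine ⟨nablaVertex β ξ - x,
    coneI_mono β hZP (faceDirection_subset_coneI hqs hβ0 (by simpa using neg_mem hx)),
    -nablaVertex β ξ, neg_mem_nabla β (hqs.sum_eq_zero hβ0) (half_sum_mem_nabla β _), ?_⟩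
  rw [hcompl, nablaVertex]
  module

lemma apply_nablaVertex_le_of_mem_AI (hsum : ∑ i, β i = 0) {I : Finset (Fin N)}
    (hneg : ∀ i, ξ (β i) < 0 → i ∈ I) (hI : ∀ i ∈ I, ξ (β i) ≤ 0) (hx : x ∈ AI β I) :
    ξ (nablaVertex β ξ) ≤ ξ x := by
  obtain ⟨c, hc, n, hn, rfl⟩ := hx
  have hξc : 0 ≤ (-ξ) c := apply_nonneg_of_mem_coneI (fun i hi => by simpa using hI i hi) hc
  have hξn : ξ (-n) ≤ ξ (nablaVertex β ξ) :=
    apply_le_apply_nablaVertex (neg_mem_nabla β hsum hn)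
  have hIP : ∑ i ∈ I, ξ (β i) ≤ ∑ i ∈ (posIdx β ξ)ᶜ, ξ (β i) :=
    sum_le_sum_of_subset_of_nonneg (fun i hi => by simpa [mem_posIdx] using hI i hi)
      fun i _ hiI => not_lt.1 fun h => hiI (hneg i h)
  have htotal : ∑ i ∈ (posIdx β ξ)ᶜ, ξ (β i) + ∑ i ∈ posIdx β ξ, ξ (β i) = 0 := by
    rw [sum_compl_add_sum, ← map_sum, hsum, map_zero]
  have hvertex : ξ (nablaVertex β ξ) = 2⁻¹ * ∑ i ∈ posIdx β ξ, ξ (β i) := by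
    simp [nablaVertex, map_sum]
  simp only [map_add, map_sub, map_neg, map_sum, LinearMap.neg_apply] at hξc hξn ⊢
  linarith

lemma sub_nablaVertex_mem_faceDirection_of_mem_AI {J : Finset (Fin N)}
    (hJ : ∀ i ∈ J, 0 ≤ ξ (β i)) (hx : x ∈ AI β J) (hle : ξ (nablaVertex β ξ) ≤ ξ x) :
    x - nablaVertex β ξ ∈ faceDirection β ξ := by
  obtain ⟨c, hc, n, hn, rfl⟩ := hx
  have hξc := apply_nonneg_of_mem_coneI hJ hc
  have hξn := apply_le_apply_nablaVertex (ξ := ξ) hn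
  have hξJ := sum_nonneg hJ
  simp only [map_add, map_sub, map_neg, map_sum] at hle
  have hJZ : ∀ i ∈ J, ξ (β i) = 0 := (sum_eq_zero_iff_of_nonneg hJ).1 (by linarith)
  have hJD : span ℝ (β '' J) ≤ faceDirection β ξ :=
    span_mono (Set.image_mono fun i hi => mem_zeroIdx.2 (hJZ i hi))
  rw [show -∑ i ∈ J, β i - c + n - nablaVertex β ξ =
    -∑ i ∈ J, β i - c - (nablaVertex β ξ - n) by abel]
  exact sub_mem (sub_mem (neg_mem (sum_mem fun i hi => beta_mem_faceDirection (hJZ i hi)))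
    (hJD (coneI_subset_span β J hc))) (nablaVertex_sub_mem_faceDirection hn (by linarith))

end Membership

theorem singular_support_combinatorial_core
    {N k : ℕ}
    (β : Fin N → (Fin k → ℝ))
    (hβ0 : ∀ i, β i ≠ 0)
    (hqs : ∀ L : Submodule ℝ (Fin k → ℝ), Module.finrank ℝ L = 1 →
      ∑ i ∈ Finset.univ.filter (fun i => β i ∈ L), β i = 0)
    (ξ : (Fin k → ℝ) →ₗ[ℝ] ℝ)
    (δ : Fin k → ℝ) (v : Fin k → ℤ) :
    (∃ I J : Finset (Fin N),
        (δ - fun j => (v j : ℝ)) ∈ AI β I ∧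
        (δ - fun j => (v j : ℝ)) ∈ AI β J ∧
        (∀ i, ξ (β i) < 0 → i ∈ I) ∧ (∀ i ∈ I, ξ (β i) ≤ 0) ∧
        (∀ i ∈ J, 0 ≤ ξ (β i))) ↔
      (δ - fun j => (v j : ℝ)) ∈ affineSpan ℝ (exposedFace β ξ) := by
  have hqs : QuasiSymmetric ℝ β := hqs
  rw [mem_affineSpan_exposedFace_iff]
  constructor
  · rintro ⟨I, J, hxI, hxJ, hneg, hI, hJ⟩
    exact sub_nablaVertex_mem_faceDirection_of_mem_AI hJ hxJ
      (apply_nablaVertex_le_of_mem_AI (hqs.sum_eq_zero hβ0) hneg hI hxI)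
  · intro hx
    refine ⟨(posIdx β ξ)ᶜ, zeroIdx β ξ, mem_AI_compl_posIdx hqs hβ0 hx,
      mem_AI_zeroIdx hqs hβ0 hx, fun i hi => ?_, fun i hi => ?_, fun i hi => ?_⟩
    · simpa [mem_posIdx] using hi.le
    · simpa [mem_posIdx] using hi
    · exact (mem_zeroIdx.1 hi).ge
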